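/- In the quantum-matrix algebra 𝕄, for every n ≥ 1, all tuples Γ̃ = (Γ₁,…,Γ_n) and Γ̃' = (Γ'₁,…,Γ'_n) of elements of Y⁺, and every σ ∈ S_n: L_n(Γ̃∘σ, Γ̃') = q(Γ̃,σ)·L_n(Γ̃, Γ̃') and R_n(Γ̃, Γ̃'∘σ) = q(Γ̃',σ)·R_n(Γ̃, Γ̃'), where L_n(Γ̃,Γ̃') := Σ_{κ ∈ S_n} q(Γ̃',κ)·A_{Γ₁,Γ'_{κ(1)}}·A_{Γ₂,Γ'_{κ(2)}}⋯A_{Γ_n,Γ'_{κ(n)}} and R_n(Γ̃,Γ̃') := Σ_{κ ∈ S_n} q(Γ̃,κ)·A_{Γ_{κ(1)},Γ'₁}·A_{Γ_{κ(2)},Γ'₂}⋯A_{Γ_{κ(n)},Γ'_n}. -/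

import Mathlib

open scoped Classical

noncomputable section

namespace NC

/-- Number of leaves of a planar binary tree. -/
def leaves {α : Type*} : FreeMagma α → ℕ
  | .of _ => 1
  | .mul a b => leaves a + leaves b

/-- The list of leaf labels of a planar binary tree, read left to right. -/
def leafList {α : Type*} : FreeMagma α → List α
  | .of i => [i]
  | .mul a b => leafList a ++ leafList b

/-- Planar binary trees with leaves labelled in `Fin (2*d)`. -/
abbrev M (d : ℕ) := FreeMagma (Fin (2 * d))

/-- The strict order `≺` on labelled planar binary trees. -/
def mlt {d : ℕ} : M d → M d → Prop
  | .of i, .of j => i < j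
  | .of _, .mul _ _ => True
  | .mul _ _, .of _ => False
  | .mul a b, .mul c e =>
      leaves (FreeMagma.mul a b) < leaves (FreeMagma.mul c e) ∨
        (leaves (FreeMagma.mul a b) = leaves (FreeMagma.mul c e) ∧
          (mlt a c ∨ (a = c ∧ mlt b e)))

/-- `a ⪰ b`. -/
def mge {d : ℕ} (a b : M d) : Prop := mlt b a ∨ a = b

/-- The set `Y⁺` of admissible trees. -/
inductive Yplus {d : ℕ} : M d → Prop
  | of (i : Fin (2 * d)) : Yplus (FreeMagma.of i)
  | mul {a b : M d} : Yplus a → Yplus b → mlt a b → Yplus (a * b)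

abbrev Yp (d : ℕ) := {Γ : M d // Yplus Γ}

variable {d : ℕ} {K : Type*} [CommRing K]

/-- Extension of `q` to pairs of trees. -/
def qT (q : Fin (2 * d) → Fin (2 * d) → Kˣ) (Γ Γ' : M d) : Kˣ :=
  ((leafList Γ).map fun i => ((leafList Γ').map fun j => q i j).prod).prod

/-- Defining relations of the bracketing (epoché) algebra. -/
inductive Erel (q : Fin (2 * d) → Fin (2 * d) → Kˣ) :
    FreeAlgebra K (M d) → FreeAlgebra K (M d) → Prop
  | rel (Γ Γ' : M d) :
      Erel q (FreeAlgebra.ι K Γ * FreeAlgebra.ι K Γ')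
        (((qT q Γ' Γ : Kˣ) : K) • (FreeAlgebra.ι K Γ' * FreeAlgebra.ι K Γ)
          + FreeAlgebra.ι K (Γ * Γ'))

/-- The bracketing (epoché) algebra `E`. -/
abbrev E (q : Fin (2 * d) → Fin (2 * d) → Kˣ) := RingQuot (Erel (K := K) q)

/-- The noncommutative Planck constants `ℏ_Γ`. -/
def hbar (q : Fin (2 * d) → Fin (2 * d) → Kˣ) (Γ : M d) : E q :=
  RingQuot.mkAlgHom K (Erel q) (FreeAlgebra.ι K Γ)

/-- Defining relations of the classical shadow. -/
inductive Arel (q : Fin (2 * d) → Fin (2 * d) → Kˣ) :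
    FreeAlgebra K (Yp d) → FreeAlgebra K (Yp d) → Prop
  | rel (Γ Γ' : Yp d) :
      Arel q (FreeAlgebra.ι K Γ * FreeAlgebra.ι K Γ')
        (((qT q Γ'.1 Γ.1 : Kˣ) : K) • (FreeAlgebra.ι K Γ' * FreeAlgebra.ι K Γ))

/-- The classical shadow `A`. -/
abbrev A (q : Fin (2 * d) → Fin (2 * d) → Kˣ) := RingQuot (Arel (K := K) q)

/-- The generators `h_Γ` of the classical shadow. -/
def hA (q : Fin (2 * d) → Fin (2 * d) → Kˣ) (Γ : Yp d) : A q :=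
  RingQuot.mkAlgHom K (Arel q) (FreeAlgebra.ι K Γ)

/-- A weakly decreasing list of trees: `Γ₁ ⪰ Γ₂ ⪰ … ⪰ Γ_n`. -/
def DecChain {d : ℕ} (l : List (Yp d)) : Prop := l.Chain' fun a b => mge a.1 b.1

/-- Total degree of a list of trees. -/
def degList {d : ℕ} (l : List (M d)) : ℕ := (l.map fun Γ => leaves Γ - 1).sum

/-- The decreasing filtration `F` on `E`. -/
def Ffil (q : Fin (2 * d) → Fin (2 * d) → Kˣ) (n : ℕ) : Submodule K (E q) :=
  Submodule.span K {x | ∃ l : List (M d), n ≤ degList l ∧ x = (l.map (hbar q)).prod}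

/-- Homogeneous component of degree `D` of the classical shadow. -/
def Adeg (q : Fin (2 * d) → Fin (2 * d) → Kˣ) (D : ℕ) : Submodule K (A q) :=
  Submodule.span K {x | ∃ l : List (Yp d),
    DecChain l ∧ degList (l.map (·.1)) = D ∧ x = (l.map (hA q)).prod}

/-- The braiding coefficient `q(Γ̃, σ)`. -/
def qPerm (q : Fin (2 * d) → Fin (2 * d) → Kˣ) {n : ℕ} (Γ : Fin n → M d)
    (σ : Equiv.Perm (Fin n)) : Kˣ :=
  ∏ p ∈ Finset.univ.filter
      (fun p : Fin n × Fin n => p.1 < p.2 ∧ σ.symm p.2 < σ.symm p.1),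
    qT q (Γ p.1) (Γ p.2)

/-- The partition function `Z_n(Γ̃)`. -/
def Zfun (q : Fin (2 * d) → Fin (2 * d) → Kˣ) {n : ℕ} (Γ : Fin n → M d) : K :=
  ∑ σ : Equiv.Perm (Fin n), ((qPerm q Γ σ : Kˣ) : K) ^ 2

/-- Defining relations of the quantum-matrix algebra `𝕄`. -/
inductive Mrel (q : Fin (2 * d) → Fin (2 * d) → Kˣ) :
    FreeAlgebra K (Yp d × Yp d) → FreeAlgebra K (Yp d × Yp d) → Prop
  | rel1 (Γ₁ Γ₂ Γ₁' Γ₂' : Yp d) :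
      Mrel q
        (FreeAlgebra.ι K (Γ₂, Γ₁') * FreeAlgebra.ι K (Γ₁, Γ₂') +
          ((qT q Γ₁'.1 Γ₂'.1 : Kˣ) : K) •
            (FreeAlgebra.ι K (Γ₂, Γ₂') * FreeAlgebra.ι K (Γ₁, Γ₁')))
        (((qT q Γ₁.1 Γ₂.1 : Kˣ) : K) •
          (FreeAlgebra.ι K (Γ₁, Γ₁') * FreeAlgebra.ι K (Γ₂, Γ₂') +
            ((qT q Γ₁'.1 Γ₂'.1 : Kˣ) : K) •
              (FreeAlgebra.ι K (Γ₁, Γ₂') * FreeAlgebra.ι K (Γ₂, Γ₁'))))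
  | rel2 (Γ₁ Γ₂ Γ₁' Γ₂' : Yp d) :
      Mrel q
        (FreeAlgebra.ι K (Γ₁, Γ₂') * FreeAlgebra.ι K (Γ₂, Γ₁') +
          ((qT q Γ₁.1 Γ₂.1 : Kˣ) : K) •
            (FreeAlgebra.ι K (Γ₂, Γ₂') * FreeAlgebra.ι K (Γ₁, Γ₁')))
        (((qT q Γ₁'.1 Γ₂'.1 : Kˣ) : K) •
          (FreeAlgebra.ι K (Γ₁, Γ₁') * FreeAlgebra.ι K (Γ₂, Γ₂') +
            ((qT q Γ₁.1 Γ₂.1 : Kˣ) : K) •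
              (FreeAlgebra.ι K (Γ₂, Γ₁') * FreeAlgebra.ι K (Γ₁, Γ₂'))))

/-- The quantum-matrix algebra `𝕄`. -/
abbrev Mq (q : Fin (2 * d) → Fin (2 * d) → Kˣ) := RingQuot (Mrel (K := K) q)

/-- The generators `A_{Γ,Γ'}` of `𝕄`. -/
def Amat (q : Fin (2 * d) → Fin (2 * d) → Kˣ) (Γ Γ' : Yp d) : Mq q :=
  RingQuot.mkAlgHom K (Mrel q) (FreeAlgebra.ι K (Γ, Γ'))

/-- `L_n(Γ̃,Γ̃') = Σ_{κ} q(Γ̃',κ)·A_{Γ₁,Γ'_{κ(1)}}⋯A_{Γ_n,Γ'_{κ(n)}}`. -/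
def Lfun (q : Fin (2 * d) → Fin (2 * d) → Kˣ) {n : ℕ} (Γ Γ' : Fin n → Yp d) :
    Mq (K := K) q :=
  ∑ κ : Equiv.Perm (Fin n),
    ((qPerm q (fun i => (Γ' i).1) κ : Kˣ) : K) •
      (List.ofFn fun i => Amat q (Γ i) (Γ' (κ i))).prod

/-- `R_n(Γ̃,Γ̃') = Σ_{κ} q(Γ̃,κ)·A_{Γ_{κ(1)},Γ'₁}⋯A_{Γ_{κ(n)},Γ'_n}`. -/
def Rfun (q : Fin (2 * d) → Fin (2 * d) → Kˣ) {n : ℕ} (Γ Γ' : Fin n → Yp d) :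
    Mq (K := K) q :=
  ∑ κ : Equiv.Perm (Fin n),
    ((qPerm q (fun i => (Γ i).1) κ : Kˣ) : K) •
      (List.ofFn fun i => Amat q (Γ (κ i)) (Γ' i)).prod

end NC

/-!
Both identities reduce to adjacent transpositions `s = (i i+1)`, which generate `S_n`, because
`q(Γ̃, ·)` is a cocycle: `q(Γ̃, στ) = q(Γ̃∘σ, τ) · q(Γ̃, σ)`. For any `c` with `c x y · c y x = 1`,
the product of `c x y` over the pairs ordered by one ordering and reversed by another is
multiplicative in the orderings: on each pair `{x, y}` both sides contribute `c x y ^ (ε_f - ε_h)`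
with `ε_f = [f x < f y]`.

For `s`, the terms of `L_n(Γ̃∘s, Γ̃') - q_{Γ_i,Γ_{i+1}} L_n(Γ̃, Γ̃')` indexed by `κ` and `κ s`
differ only in the two factors at positions `i, i+1`, and their sum vanishes by the first defining
relation of `𝕄`. The second relation is the transpose of the first, so `A_{Γ,Γ'} ↦ A_{Γ',Γ}` is an
algebra endomorphism of `𝕄`; it maps `L_n(Γ̃', Γ̃)` to `R_n(Γ̃, Γ̃')`, which gives the identity
for `R_n`.
-/

section CrossingProd

open Function

variable {ι ι' α G : Type*} [Fintype ι] [Fintype ι'] [LinearOrder α] [CommGroup G]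

def crossingProd (c : ι → ι → G) (f g : ι → α) : G :=
  ∏ p : ι × ι, if f p.1 < f p.2 ∧ g p.2 < g p.1 then c p.1 p.2 else 1

theorem crossingProd_comp_equiv (c : ι → ι → G) (f g : ι → α) (e : ι' ≃ ι) :
    crossingProd (fun x y => c (e x) (e y)) (f ∘ e) (g ∘ e) = crossingProd c f g :=
  Fintype.prod_equiv (e.prodCongr e) _ _ fun _ => rfl

theorem crossingProd_trans {c : ι → ι → G} (hc : ∀ x y, c x y * c y x = 1) {f g h : ι → α}
    (hf : Injective f) (hg : Injective g) (hh : Injective h) :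
    crossingProd c f h = crossingProd c g h * crossingProd c f g := by
  rw [← div_eq_one, crossingProd, crossingProd, crossingProd, ← Finset.prod_mul_distrib,
    ← Finset.prod_div_distrib]
  refine Finset.prod_ninvolution Prod.swap (fun ⟨x, y⟩ => ?_) (fun ⟨x, y⟩ hxy => ?_)
    (fun _ => Finset.mem_univ _) Prod.swap_swap
  · rcases eq_or_ne x y with rfl | hxy
    · simp
    have hyx : c y x = (c x y)⁻¹ := eq_inv_of_mul_eq_one_right (hc x y)
    rcases (hf.ne hxy).lt_or_gt with hf' | hf' <;> rcases (hg.ne hxy).lt_or_gt with hg' | hg' <;>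
      rcases (hh.ne hxy).lt_or_gt with hh' | hh' <;>
      simp [hf', hg', hh', hf'.not_gt, hg'.not_gt, hh'.not_gt, hyx]
  · simp only [ne_eq, Prod.swap_prod_mk, Prod.mk.injEq, not_and]
    rintro rfl
    simp at hxy

end CrossingProd

theorem List.exists_prod_ofFn_eq_mul_mul {R : Type*} [Monoid R] {m : ℕ} (F : Fin (m + 1) → R)
    (i : Fin m) :
    ∃ X Y : R, ∀ G : Fin (m + 1) → R, (∀ j, j ≠ i.castSucc → j ≠ i.succ → G j = F j) →
      (List.ofFn G).prod = X * (G i.castSucc * G i.succ) * Y := by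
  refine ⟨((List.ofFn F).take i).prod, ((List.ofFn F).drop (i + 2)).prod, fun G hG => ?_⟩
  have hsplit : List.ofFn G =
      (List.ofFn G).take i ++ G i.castSucc :: G i.succ :: (List.ofFn G).drop (i + 2) := by
    conv_lhs => rw [← List.take_append_drop i (List.ofFn G),
      List.drop_eq_getElem_cons (by simp), List.drop_eq_getElem_cons (by simp)]
    simp only [List.getElem_ofFn]
    rfl
  have htake : (List.ofFn G).take i = (List.ofFn F).take i :=
    List.ext_getElem (by simp) fun j h₁ _ => by
      simp only [List.length_take, List.length_ofFn, lt_min_iff] at h₁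
      simp only [List.getElem_take, List.getElem_ofFn]
      exact hG _ (by simp [Fin.ext_iff]; omega) (by simp [Fin.ext_iff]; omega)
  have hdrop : (List.ofFn G).drop (i + 2) = (List.ofFn F).drop (i + 2) :=
    List.ext_getElem (by simp) fun j h₁ _ => by
      simp only [List.length_drop, List.length_ofFn] at h₁
      simp only [List.getElem_drop, List.getElem_ofFn]
      exact hG _ (by simp [Fin.ext_iff]; omega) (by simp [Fin.ext_iff]; omega)
  rw [hsplit, htake, hdrop]
  simp [mul_assoc]

namespace NC

variable {d : ℕ} {K : Type*} [CommRing K] (q : Fin (2 * d) → Fin (2 * d) → Kˣ)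

theorem qT_mul_qT_swap (hq : ∀ i j, q i j * q j i = 1) (Γ Γ' : M d) :
    qT q Γ Γ' * qT q Γ' Γ = 1 := by
  have hswap := Multiset.prod_map_prod_map (leafList Γ : Multiset (Fin (2 * d)))
    (leafList Γ') (f := fun i j => q j i)
  simp only [Multiset.map_coe, Multiset.prod_coe] at hswap
  rw [qT, qT, ← hswap, ← List.prod_map_mul]
  simp [← List.prod_map_mul, hq]

theorem qPerm_eq_crossingProd {n : ℕ} (Γ : Fin n → M d) (σ : Equiv.Perm (Fin n)) :
    qPerm q Γ σ = crossingProd (fun x y => qT q (Γ x) (Γ y)) id σ.symm :=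
  Finset.prod_filter _ _

theorem qPerm_one {n : ℕ} (Γ : Fin n → M d) : qPerm q Γ 1 = 1 :=
  Finset.prod_eq_one fun _ hp => ((Finset.mem_filter.1 hp).2.elim lt_asymm).elim

theorem qPerm_mul (hq : ∀ i j, q i j * q j i = 1) {n : ℕ} (Γ : Fin n → M d)
    (σ τ : Equiv.Perm (Fin n)) :
    qPerm q Γ (σ * τ) = qPerm q (fun i => Γ (σ i)) τ * qPerm q Γ σ := by
  have hσ : (σ.symm ∘ σ : Fin n → Fin n) = id := funext σ.symm_apply_apply
  have hστ : ((σ * τ).symm ∘ σ : Fin n → Fin n) = τ.symm :=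
    funext fun x => by simp [Equiv.Perm.mul_def]
  have hcomp := crossingProd_comp_equiv (fun x y => qT q (Γ x) (Γ y)) σ.symm (σ * τ).symm σ
  rw [hσ, hστ] at hcomp
  rw [qPerm_eq_crossingProd, qPerm_eq_crossingProd, qPerm_eq_crossingProd, hcomp]
  exact crossingProd_trans (fun x y => qT_mul_qT_swap q hq _ _) Function.injective_id
    σ.symm.injective (σ * τ).symm.injective

theorem qPerm_swap_castSucc_succ {m : ℕ} (Γ : Fin (m + 1) → M d) (i : Fin m) :
    qPerm q Γ (Equiv.swap i.castSucc i.succ) = qT q (Γ i.castSucc) (Γ i.succ) := by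
  rw [qPerm_eq_crossingProd, crossingProd, Fintype.prod_eq_single (i.castSucc, i.succ)]
  · simp
  · rintro ⟨x, y⟩ hxy
    rw [if_neg]
    simp only [ne_eq, Prod.mk.injEq, id, Equiv.symm_swap, Fin.lt_def, Equiv.swap_apply_def,
      Fin.ext_iff, Fin.val_castSucc, Fin.val_succ] at hxy ⊢
    split_ifs <;> (try simp only [Fin.val_castSucc, Fin.val_succ]) <;> omega

theorem Amat_rel1 (Γ₁ Γ₂ Γ₁' Γ₂' : Yp d) :
    Amat q Γ₂ Γ₁' * Amat q Γ₁ Γ₂' +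
        ((qT q Γ₁'.1 Γ₂'.1 : Kˣ) : K) • (Amat q Γ₂ Γ₂' * Amat q Γ₁ Γ₁') =
      ((qT q Γ₁.1 Γ₂.1 : Kˣ) : K) • (Amat q Γ₁ Γ₁' * Amat q Γ₂ Γ₂' +
        ((qT q Γ₁'.1 Γ₂'.1 : Kˣ) : K) • (Amat q Γ₁ Γ₂' * Amat q Γ₂ Γ₁')) := by
  simpa only [map_add, map_mul, map_smul, Amat] using
    RingQuot.mkAlgHom_rel K (Mrel.rel1 (q := q) Γ₁ Γ₂ Γ₁' Γ₂')

theorem Amat_rel2 (Γ₁ Γ₂ Γ₁' Γ₂' : Yp d) :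
    Amat q Γ₁ Γ₂' * Amat q Γ₂ Γ₁' +
        ((qT q Γ₁.1 Γ₂.1 : Kˣ) : K) • (Amat q Γ₂ Γ₂' * Amat q Γ₁ Γ₁') =
      ((qT q Γ₁'.1 Γ₂'.1 : Kˣ) : K) • (Amat q Γ₁ Γ₁' * Amat q Γ₂ Γ₂' +
        ((qT q Γ₁.1 Γ₂.1 : Kˣ) : K) • (Amat q Γ₂ Γ₁' * Amat q Γ₁ Γ₂')) := by
  simpa only [map_add, map_mul, map_smul, Amat] using
    RingQuot.mkAlgHom_rel K (Mrel.rel2 (q := q) Γ₁ Γ₂ Γ₁' Γ₂')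

def transpose : Mq (K := K) q →ₐ[K] Mq (K := K) q :=
  RingQuot.liftAlgHom K ⟨FreeAlgebra.lift K fun p => Amat q p.2 p.1, fun _ _ h => by
    cases h with
    | rel1 Γ₁ Γ₂ Γ₁' Γ₂' => simpa using Amat_rel2 q Γ₁' Γ₂' Γ₁ Γ₂
    | rel2 Γ₁ Γ₂ Γ₁' Γ₂' => simpa using Amat_rel1 q Γ₁' Γ₂' Γ₁ Γ₂⟩

@[simp]
theorem transpose_Amat (Γ Γ' : Yp d) : transpose q (Amat q Γ Γ') = Amat q Γ' Γ := by
  simp [transpose, Amat]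

theorem transpose_Lfun {n : ℕ} (Γ Γ' : Fin n → Yp d) :
    transpose q (Lfun q Γ Γ') = Rfun q Γ' Γ := by
  simp [Lfun, Rfun, map_list_prod, List.map_ofFn, Function.comp_def]

def amatProd {n : ℕ} (α β : Fin n → Yp d) : Mq (K := K) q :=
  (List.ofFn fun i => Amat q (α i) (β i)).prod

theorem amatProd_swap_castSucc_succ {m : ℕ} (α β : Fin (m + 1) → Yp d) (i : Fin m) :
    amatProd q (fun j => α (Equiv.swap i.castSucc i.succ j)) β +
        ((qT q (β i.castSucc).1 (β i.succ).1 : Kˣ) : K) •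
          amatProd q (fun j => α (Equiv.swap i.castSucc i.succ j))
            (fun j => β (Equiv.swap i.castSucc i.succ j)) =
      ((qT q (α i.castSucc).1 (α i.succ).1 : Kˣ) : K) • (amatProd q α β +
        ((qT q (β i.castSucc).1 (β i.succ).1 : Kˣ) : K) •
          amatProd q α (fun j => β (Equiv.swap i.castSucc i.succ j))) := by
  obtain ⟨X, Y, hXY⟩ := List.exists_prod_ofFn_eq_mul_mul (fun j => Amat q (α j) (β j)) i
  have hoff : ∀ j, j ≠ i.castSucc → j ≠ i.succ → Equiv.swap i.castSucc i.succ j = j :=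
    fun _ => Equiv.swap_apply_of_ne_of_ne
  simp only [amatProd]
  rw [hXY _ fun j h₁ h₂ => by rw [hoff j h₁ h₂], hXY _ fun j h₁ h₂ => by rw [hoff j h₁ h₂],
    hXY _ fun _ _ _ => rfl, hXY _ fun j h₁ h₂ => by rw [hoff j h₁ h₂]]
  simp only [Equiv.swap_apply_left, Equiv.swap_apply_right]
  have hrel := congrArg (X * · * Y)
    (Amat_rel1 q (α i.castSucc) (α i.succ) (β i.castSucc) (β i.succ))
  simp only [mul_add, add_mul, mul_smul_comm, smul_mul_assoc, smul_add] at hrel ⊢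
  exact hrel

theorem Lfun_swap_castSucc_succ (hq : ∀ i j, q i j * q j i = 1) {m : ℕ}
    (Γ Γ' : Fin (m + 1) → Yp d) (i : Fin m) :
    Lfun q (fun j => Γ (Equiv.swap i.castSucc i.succ j)) Γ' =
      ((qT q (Γ i.castSucc).1 (Γ i.succ).1 : Kˣ) : K) • Lfun q Γ Γ' := by
  set s := Equiv.swap i.castSucc i.succ
  rw [Lfun, Lfun, Finset.smul_sum, ← sub_eq_zero, ← Finset.sum_sub_distrib]
  refine Finset.sum_ninvolution (· * s) (fun κ => ?_) (fun κ _ => ?_)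
    (fun _ => Finset.mem_univ _) (fun κ => by simp [s, mul_assoc])
  · have hκs : qPerm q (fun j => (Γ' j).1) (κ * s) =
        qT q (Γ' (κ i.castSucc)).1 (Γ' (κ i.succ)).1 * qPerm q (fun j => (Γ' j).1) κ := by
      rw [qPerm_mul q hq, qPerm_swap_castSucc_succ]
    have hrel := amatProd_swap_castSucc_succ q Γ (fun j => Γ' (κ j)) i
    simp only [amatProd] at hrel
    rw [hκs, Units.val_mul]
    simp only [Equiv.Perm.mul_apply]
    linear_combination (norm := module) ((qPerm q (fun j => (Γ' j).1) κ : Kˣ) : K) • hrel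
  · simpa [s, Equiv.swap_eq_one_iff] using Fin.castSucc_lt_succ.ne

theorem Lfun_comp_perm (hq : ∀ i j, q i j * q j i = 1) {n : ℕ} (Γ Γ' : Fin n → Yp d)
    (σ : Equiv.Perm (Fin n)) :
    Lfun q (fun i => Γ (σ i)) Γ' = ((qPerm q (fun i => (Γ i).1) σ : Kˣ) : K) • Lfun q Γ Γ' := by
  have hid : ∀ Γ : Fin n → Yp d,
      Lfun q (fun i => Γ ((1 : Equiv.Perm (Fin n)) i)) Γ' =
        ((qPerm q (fun i => (Γ i).1) 1 : Kˣ) : K) • Lfun q Γ Γ' := fun Γ => by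
    rw [qPerm_one, Units.val_one, one_smul]
    rfl
  cases n with
  | zero => rw [Subsingleton.elim σ 1]; exact hid Γ
  | succ m =>
    have hgen : σ ∈ Submonoid.closure
        (Set.range fun i : Fin m => Equiv.swap i.castSucc i.succ) := by
      rw [Equiv.Perm.mclosure_swap_castSucc_succ]; trivial
    induction hgen using Submonoid.closure_induction generalizing Γ with
    | mem _ h =>
      obtain ⟨i, rfl⟩ := h
      rw [Lfun_swap_castSucc_succ q hq, qPerm_swap_castSucc_succ]
    | one => exact hid Γ
    | mul σ τ _ _ ihσ ihτ =>
      rw [qPerm_mul q hq, Units.val_mul, mul_smul, ← ihσ, ← ihτ]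
      rfl

theorem Rfun_comp_perm (hq : ∀ i j, q i j * q j i = 1) {n : ℕ} (Γ Γ' : Fin n → Yp d)
    (σ : Equiv.Perm (Fin n)) :
    Rfun q Γ (fun i => Γ' (σ i)) = ((qPerm q (fun i => (Γ' i).1) σ : Kˣ) : K) • Rfun q Γ Γ' := by
  rw [← transpose_Lfun, ← transpose_Lfun, Lfun_comp_perm q hq, map_smul]

theorem statement14_general (d : ℕ) (K : Type*) [CommRing K]
    (q : Fin (2 * d) → Fin (2 * d) → Kˣ)
    (hq2 : ∀ i j, q i j * q j i = 1)
    (n : ℕ) (Γ Γ' : Fin n → Yp d) (σ : Equiv.Perm (Fin n)) :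
    Lfun (K := K) q (fun i => Γ (σ i)) Γ' =
        ((qPerm q (fun i => (Γ i).1) σ : Kˣ) : K) • Lfun (K := K) q Γ Γ' ∧
      Rfun (K := K) q Γ (fun i => Γ' (σ i)) =
        ((qPerm q (fun i => (Γ' i).1) σ : Kˣ) : K) • Rfun (K := K) q Γ Γ' :=
  ⟨Lfun_comp_perm q hq2 Γ Γ' σ, Rfun_comp_perm q hq2 Γ Γ' σ⟩

/-- in the quantum-matrix algebra,
`L_n(Γ̃∘σ, Γ̃') = q(Γ̃,σ)·L_n(Γ̃,Γ̃')` and `R_n(Γ̃, Γ̃'∘σ) = q(Γ̃',σ)·R_n(Γ̃,Γ̃')`. -/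
theorem statement14 (d : ℕ) (hd : 1 ≤ d) (K : Type*) [CommRing K]
    (q : Fin (2 * d) → Fin (2 * d) → Kˣ)
    (hq1 : ∀ i, q i i = 1) (hq2 : ∀ i j, q i j * q j i = 1)
    (n : ℕ) (hn : 1 ≤ n) (Γ Γ' : Fin n → Yp d) (σ : Equiv.Perm (Fin n)) :
    Lfun (K := K) q (fun i => Γ (σ i)) Γ' =
        ((qPerm q (fun i => (Γ i).1) σ : Kˣ) : K) • Lfun (K := K) q Γ Γ' ∧
      Rfun (K := K) q Γ (fun i => Γ' (σ i)) =
        ((qPerm q (fun i => (Γ' i).1) σ : Kˣ) : K) • Rfun (K := K) q Γ Γ' :=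
  statement14_general d K q hq2 n Γ Γ' σ

end NC
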